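/- Let ε, λ, δ be real constants with ελ ≠ 0, and let s be any real number. If u : ℝ × ℝ → ℝ is a smooth solution of u_t + u u_x + λ e^{t} u_{xx} + ε e^{t} u_{xxt} = δ e^{t/2}, then the function v(t,x) = e^{s} u(t − 2s, e^{−s}x) is also a smooth solution of the same equation. -/

import Mathlib

/-- Partial derivative in the first (time) variable. -/
noncomputable def partialT (v : ℝ → ℝ → ℝ) (t x : ℝ) : ℝ := deriv (fun s => v s x) t

/-- Partial derivative in the second (space) variable. -/
noncomputable def partialX (v : ℝ → ℝ → ℝ) (t x : ℝ) : ℝ := deriv (fun y => v t y) x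

/-- Second partial derivative in the space variable. -/
noncomputable def partialXX (v : ℝ → ℝ → ℝ) (t x : ℝ) : ℝ := deriv (fun y => partialX v t y) x

/-- Mixed third-order partial derivative: twice in space, once in time. -/
noncomputable def partialXXT (v : ℝ → ℝ → ℝ) (t x : ℝ) : ℝ := deriv (fun s => partialXX v s x) t

/-!
The generator `2∂_t + x∂_x + u∂_u` integrates to `v(t,x) = e^s u(t - 2s, e^{-s}x)`. Under this change
of variables each `x`-derivative contributes a factor `e^{-s}` and the `t`-derivative none, so
`v_t`, `v v_x` and `e^t v_xx`, `e^t v_xxt` (using `e^t = e^{2s} e^{t-2s}`) are all `e^s` times the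
corresponding terms of `u` at `(t - 2s, e^{-s}x)`, as is the source `δ e^{t/2} = e^s δ e^{(t-2s)/2}`.
-/

open Function

section PartialDerivatives

variable {u : ℝ → ℝ → ℝ}

theorem partialXX_eq_partialX_partialX (u : ℝ → ℝ → ℝ) : partialXX u = partialX (partialX u) := rfl

theorem partialXXT_eq_partialT_partialXX (u : ℝ → ℝ → ℝ) :
    partialXXT u = partialT (partialXX u) := rfl

theorem hasDerivAt_fderiv_apply_zero_one (hu : Differentiable ℝ (uncurry u)) (t x : ℝ) :
    HasDerivAt (u t) (fderiv ℝ (uncurry u) (t, x) (0, 1)) x :=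
  (hu (t, x)).hasFDerivAt.comp_hasDerivAt x ((hasDerivAt_const x t).prodMk (hasDerivAt_id x))

theorem partialX_eq_fderiv (hu : Differentiable ℝ (uncurry u)) (t x : ℝ) :
    partialX u t x = fderiv ℝ (uncurry u) (t, x) (0, 1) :=
  (hasDerivAt_fderiv_apply_zero_one hu t x).deriv

theorem hasDerivAt_partialX (hu : Differentiable ℝ (uncurry u)) (t x : ℝ) :
    HasDerivAt (u t) (partialX u t x) x :=
  (hasDerivAt_fderiv_apply_zero_one hu t x).differentiableAt.hasDerivAt

theorem hasDerivAt_partialT (hu : Differentiable ℝ (uncurry u)) (t x : ℝ) :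
    HasDerivAt (fun s => u s x) (partialT u t x) t := by
  have h : HasDerivAt (fun s => u s x) (fderiv ℝ (uncurry u) (t, x) (1, 0)) t :=
    ((hu (t, x)).hasFDerivAt.comp_hasDerivAt t ((hasDerivAt_id' t).prodMk (hasDerivAt_const t x)) :)
  exact h.differentiableAt.hasDerivAt

theorem ContDiff.uncurry_partialX {n : WithTop ℕ∞} (hu : ContDiff ℝ (n + 1) (uncurry u)) :
    ContDiff ℝ n (uncurry (partialX u)) := by
  have hdiff : Differentiable ℝ (uncurry u) := hu.differentiable (by simp)
  have hfun : uncurry (partialX u) = fun p => fderiv ℝ (uncurry u) p (0, 1) := by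
    funext p
    exact partialX_eq_fderiv hdiff p.1 p.2
  rw [hfun]
  exact (hu.fderiv_right le_rfl).clm_apply contDiff_const

end PartialDerivatives

section Rescale

def rescale (a τ b : ℝ) (u : ℝ → ℝ → ℝ) (t x : ℝ) : ℝ := a * u (t - τ) (b * x)

variable {u : ℝ → ℝ → ℝ} (a τ b : ℝ)

theorem ContDiff.uncurry_rescale {n : WithTop ℕ∞} (hu : ContDiff ℝ n (uncurry u)) :
    ContDiff ℝ n (uncurry (rescale a τ b u)) :=
  contDiff_const.mul <|
    hu.comp ((contDiff_fst.sub contDiff_const).prodMk (contDiff_const.mul contDiff_snd))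

theorem partialX_rescale (hu : Differentiable ℝ (uncurry u)) :
    partialX (rescale a τ b u) = rescale (a * b) τ b (partialX u) := by
  funext t x
  have h : HasDerivAt (fun y => a * u (t - τ) (b * y))
      (a * (partialX u (t - τ) (b * x) * (b * 1))) x :=
    ((hasDerivAt_partialX hu (t - τ) (b * x)).comp x ((hasDerivAt_id x).const_mul b)).const_mul a
  change deriv (fun y => a * u (t - τ) (b * y)) x = a * b * partialX u (t - τ) (b * x)
  rw [h.deriv]
  ring

theorem partialT_rescale (hu : Differentiable ℝ (uncurry u)) :
    partialT (rescale a τ b u) = rescale a τ b (partialT u) := by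
  funext t x
  have h : HasDerivAt (fun s => a * u (s - τ) (b * x)) (a * partialT u (t - τ) (b * x)) t :=
    ((hasDerivAt_partialT hu (t - τ) (b * x)).comp_sub_const t τ).const_mul a
  exact h.deriv

theorem partialXX_rescale (hu : ContDiff ℝ 2 (uncurry u)) :
    partialXX (rescale a τ b u) = rescale (a * b ^ 2) τ b (partialXX u) := by
  have hux : Differentiable ℝ (uncurry (partialX u)) :=
    (ContDiff.uncurry_partialX (n := 1) hu).differentiable one_ne_zero
  rw [partialXX_eq_partialX_partialX, partialX_rescale _ _ _ (hu.differentiable (by norm_num)),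
    partialX_rescale _ _ _ hux, partialXX_eq_partialX_partialX]
  congr 1
  ring

theorem partialXXT_rescale (hu : ContDiff ℝ 3 (uncurry u)) :
    partialXXT (rescale a τ b u) = rescale (a * b ^ 2) τ b (partialXXT u) := by
  have huxx : Differentiable ℝ (uncurry (partialXX u)) :=
    (ContDiff.uncurry_partialX (n := 1)
      (ContDiff.uncurry_partialX (n := 2) hu)).differentiable one_ne_zero
  rw [partialXXT_eq_partialT_partialXX, partialXX_rescale _ _ _ (hu.of_le (by norm_num)),
    partialT_rescale _ _ _ huxx, partialXXT_eq_partialT_partialXX]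

end Rescale

theorem stmt_5_general (ε lam δ s : ℝ)
    (u : ℝ → ℝ → ℝ)
    (hu : ContDiff ℝ (⊤ : ℕ∞) (fun p : ℝ × ℝ => u p.1 p.2))
    (hsol : ∀ t x, partialT u t x + u t x * partialX u t x
      + lam * Real.exp t * partialXX u t x + ε * Real.exp t * partialXXT u t x
      = δ * Real.exp (t / 2))
    (v : ℝ → ℝ → ℝ)
    (hv : ∀ t x, v t x = Real.exp s * u (t - 2 * s) (Real.exp (-s) * x)) :
    ContDiff ℝ (⊤ : ℕ∞) (fun p : ℝ × ℝ => v p.1 p.2) ∧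
    ∀ t x, partialT v t x + v t x * partialX v t x
      + lam * Real.exp t * partialXX v t x + ε * Real.exp t * partialXXT v t x
      = δ * Real.exp (t / 2) := by
  obtain rfl : v = rescale (Real.exp s) (2 * s) (Real.exp (-s)) u := funext₂ hv
  refine ⟨hu.uncurry_rescale _ _ _, fun t x => ?_⟩
  rw [partialT_rescale _ _ _ (hu.differentiable (by simp)),
    partialX_rescale _ _ _ (hu.differentiable (by simp)),
    partialXX_rescale _ _ _ (hu.of_le (WithTop.coe_le_coe.mpr le_top)),
    partialXXT_rescale _ _ _ (hu.of_le (WithTop.coe_le_coe.mpr le_top))]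
  have key := hsol (t - 2 * s) (Real.exp (-s) * x)
  have hexp_t : Real.exp t = Real.exp s ^ 2 * Real.exp (t - 2 * s) := by
    rw [← Real.exp_nat_mul, ← Real.exp_add]; ring_nf
  have hexp_half : Real.exp (t / 2) = Real.exp s * Real.exp ((t - 2 * s) / 2) := by
    rw [← Real.exp_add]; ring_nf
  simp only [rescale]
  set y := Real.exp (-s) * x
  rw [hexp_t, hexp_half, Real.exp_neg]
  field_simp
  linear_combination key

/-- the one-parameter Lie symmetry group
`(t,x,u) ↦ (t + 2s, e^{s}x, e^{s}u)` of the equation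
`u_t + u u_x + λ e^t u_xx + ε e^t u_xxt = δ e^{t/2}` maps solutions to solutions. -/
theorem stmt_5 (ε lam δ s : ℝ) (hεlam : ε * lam ≠ 0)
    (u : ℝ → ℝ → ℝ)
    (hu : ContDiff ℝ (⊤ : ℕ∞) (fun p : ℝ × ℝ => u p.1 p.2))
    (hsol : ∀ t x, partialT u t x + u t x * partialX u t x
      + lam * Real.exp t * partialXX u t x + ε * Real.exp t * partialXXT u t x
      = δ * Real.exp (t / 2))
    (v : ℝ → ℝ → ℝ)
    (hv : ∀ t x, v t x = Real.exp s * u (t - 2 * s) (Real.exp (-s) * x)) :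
    ContDiff ℝ (⊤ : ℕ∞) (fun p : ℝ × ℝ => v p.1 p.2) ∧
    ∀ t x, partialT v t x + v t x * partialX v t x
      + lam * Real.exp t * partialXX v t x + ε * Real.exp t * partialXXT v t x
      = δ * Real.exp (t / 2) :=
  stmt_5_general ε lam δ s u hu hsol v hv
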